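/- arXiv:2103.02924 — 4 statements merged into one kernel-verified Lean document; each statement's English description precedes it below -/
import Mathlib

section
/- Assume the generalized moment problem val = inf { ∫_K f_0 dμ : μ a positive finite Borel measure on K, ∫_K f_i dμ = b_i for all i ∈ {1,...,m}, μ(K) ≤ 1 } is feasible (i.e. some positive finite Borel measure on K satisfies all constraints). Then the infimum is attained by some feasible measure, and val equals the value val' of the dual problem val' = sup { Σ_{i=1}^m y_i b_i − t : (y,t) ∈ ℝ^m × ℝ_{≥0}, f_0(x) − Σ_{i=1}^m y_i f_i(x) + t ≥ 0 for all x ∈ K }. -/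
/-!
Push measures forward by the moment map `g x = ((f i x)ᵢ, f0 x)`. The moment vectors `∫ g dμ` of
the sub-probability measures `μ` on `K` fill exactly `S = conv ({0} ∪ g '' K)`: such integrals stay
in this closed convex set containing `0`, and convex combinations of `0` and Dirac masses realise
every point of it. By Carathéodory `S` is compact, so the primal values form the compact fibre
`{s | (b, s) ∈ S}` and the infimum is attained. A dual pair `(y, t)` is exactly an affine function
`p ↦ ∑ yᵢ pᵢ - t` lying below the last coordinate on `S`, whence weak duality; strong duality comes
from separating `(b, val - ε)` from `S` by a hyperplane, which cannot be vertical since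
`(b, val) ∈ S`.
-/

open MeasureTheory Set

section ConvexHull

variable {E : Type*} [NormedAddCommGroup E] [NormedSpace ℝ E]

theorem convexHull_range_eq_image_stdSimplex {ι : Type*} [Fintype ι] (v : ι → E) :
    convexHull ℝ (range v) = (fun w : ι → ℝ => ∑ i, w i • v i) '' stdSimplex ℝ ι := by
  classical
  let L : (ι → ℝ) →ₗ[ℝ] E := ∑ i, (LinearMap.proj i).smulRight (v i)
  have hL : ⇑L = fun w => ∑ i, w i • v i := by ext w; simp [L]
  rw [← hL, ← convexHull_basis_eq_stdSimplex, LinearMap.image_convexHull, ← range_comp]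
  congr 2
  ext i
  simp [L]

theorem exists_fin_finrank_succ_of_mem_convexHull [FiniteDimensional ℝ E] {s : Set E} {x : E}
    (hx : x ∈ convexHull ℝ s) :
    ∃ v : Fin (Module.finrank ℝ E + 1) → E, range v ⊆ s ∧ x ∈ convexHull ℝ (range v) := by
  rw [convexHull_eq_union] at hx
  simp only [mem_iUnion] at hx
  obtain ⟨t, hts, ht_indep, hxt⟩ := hx
  obtain ⟨y, hy⟩ := convexHull_nonempty_iff.1 ⟨x, hxt⟩
  have : Nonempty t := ⟨⟨y, hy⟩⟩
  have hcard : Fintype.card t ≤ Fintype.card (Fin (Module.finrank ℝ E + 1)) := by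
    simpa using ht_indep.card_le_finrank_succ.trans
      (Nat.succ_le_succ (Submodule.finrank_le _))
  obtain ⟨e⟩ := Function.Embedding.nonempty_of_card_le hcard
  refine ⟨(↑) ∘ Function.invFun e, ?_, ?_⟩
  all_goals rw [range_comp, (Function.invFun_surjective e.injective).range_eq, image_univ,
    Subtype.range_coe]
  exacts [hts, hxt]

theorem IsCompact.convexHull [FiniteDimensional ℝ E] {s : Set E} (hs : IsCompact s) :
    IsCompact (_root_.convexHull ℝ s) := by
  have hhull : _root_.convexHull ℝ s = (fun p : (Fin (Module.finrank ℝ E + 1) → ℝ) × (_ → E) =>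
      ∑ i, p.1 i • p.2 i) '' stdSimplex ℝ _ ×ˢ univ.pi fun _ => s := by
    refine Subset.antisymm (fun x hx => ?_) ?_
    · obtain ⟨v, hvs, hxv⟩ := exists_fin_finrank_succ_of_mem_convexHull hx
      rw [convexHull_range_eq_image_stdSimplex] at hxv
      obtain ⟨w, hw, rfl⟩ := hxv
      exact ⟨(w, v), ⟨hw, fun i _ => hvs (mem_range_self i)⟩, rfl⟩
    · rintro _ ⟨⟨w, v⟩, ⟨hw, hv⟩, rfl⟩
      refine convexHull_mono ?_ ((convexHull_range_eq_image_stdSimplex v).ge ⟨w, hw, rfl⟩)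
      rintro _ ⟨i, rfl⟩
      exact hv i (mem_univ i)
  rw [hhull]
  exact ((isCompact_stdSimplex ℝ _).prod (isCompact_univ_pi fun _ => hs)).image
    (by fun_prop)

end ConvexHull

theorem Convex.integral_mem_of_measure_univ_le_one {α E : Type*} [MeasurableSpace α]
    [NormedAddCommGroup E] [NormedSpace ℝ E] [CompleteSpace E] {C : Set E} (hC : Convex ℝ C)
    (hCc : IsClosed C) (hC0 : 0 ∈ C) {μ : Measure α} [IsFiniteMeasure μ] (hμ : μ univ ≤ 1)
    {g : α → E} (hg : Integrable g μ) (hgC : ∀ᵐ x ∂μ, g x ∈ C) : ∫ x, g x ∂μ ∈ C := by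
  rcases eq_zero_or_neZero μ with rfl | _
  · simpa using hC0
  rw [← measure_smul_average]
  refine hC.smul_mem_of_zero_mem hC0 (hC.average_mem hCc hgC hg) ⟨measureReal_nonneg, ?_⟩
  exact ENNReal.toReal_le_of_le_ofReal zero_le_one (by simpa using hμ)

section SubProbability

variable {α : Type*} [MeasurableSpace α]

def subProbMeasuresOn (K : Set α) : Set (Measure α) := {μ | μ Kᶜ = 0 ∧ μ K ≤ 1}

variable {K : Set α} {μ ν : Measure α}

theorem measure_univ_le_one_of_mem_subProbMeasuresOn (hμ : μ ∈ subProbMeasuresOn K) :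
    μ univ ≤ 1 := by
  rw [← measure_congr (ae_eq_univ.2 hμ.1)]
  exact hμ.2

theorem isFiniteMeasure_of_mem_subProbMeasuresOn (hμ : μ ∈ subProbMeasuresOn K) :
    IsFiniteMeasure μ :=
  ⟨(measure_univ_le_one_of_mem_subProbMeasuresOn hμ).trans_lt ENNReal.one_lt_top⟩

theorem zero_mem_subProbMeasuresOn : (0 : Measure α) ∈ subProbMeasuresOn K := by
  simp [subProbMeasuresOn]

theorem dirac_mem_subProbMeasuresOn (hK : MeasurableSet K) {x : α} (hx : x ∈ K) :
    Measure.dirac x ∈ subProbMeasuresOn K :=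
  ⟨by simp [Measure.dirac_apply' _ hK.compl, hx], prob_le_one⟩

theorem smul_add_smul_mem_subProbMeasuresOn (hμ : μ ∈ subProbMeasuresOn K)
    (hν : ν ∈ subProbMeasuresOn K) {a b : ℝ} (ha : 0 ≤ a) (hb : 0 ≤ b) (hab : a + b = 1) :
    ENNReal.ofReal a • μ + ENNReal.ofReal b • ν ∈ subProbMeasuresOn K := by
  refine ⟨by simp [hμ.1, hν.1], ?_⟩
  calc ENNReal.ofReal a * μ K + ENNReal.ofReal b * ν K
      ≤ ENNReal.ofReal a + ENNReal.ofReal b :=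
        add_le_add (mul_le_of_le_one_right' hμ.2) (mul_le_of_le_one_right' hν.2)
    _ = 1 := by rw [← ENNReal.ofReal_add ha hb, hab, ENNReal.ofReal_one]

end SubProbability

section Moments

variable {α E : Type*} [MeasurableSpace α] [TopologicalSpace α] [OpensMeasurableSpace α]
  [T2Space α] [NormedAddCommGroup E] {K : Set α} {g : α → E}

theorem ContinuousOn.integrable_of_mem_subProbMeasuresOn (hK : IsCompact K)
    (hg : ContinuousOn g K) {μ : Measure α} (hμ : μ ∈ subProbMeasuresOn K) : Integrable g μ := by
  have := isFiniteMeasure_of_mem_subProbMeasuresOn hμ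
  rw [← Measure.restrict_eq_self_of_ae_mem (mem_ae_iff.2 hμ.1)]
  exact hg.integrableOn_compact hK

variable [NormedSpace ℝ E]

theorem convex_image_integral_subProbMeasuresOn (hK : IsCompact K) (hg : ContinuousOn g K) :
    Convex ℝ ((fun μ => ∫ x, g x ∂μ) '' subProbMeasuresOn K) := by
  rintro _ ⟨μ, hμ, rfl⟩ _ ⟨ν, hν, rfl⟩ a b ha hb hab
  refine ⟨_, smul_add_smul_mem_subProbMeasuresOn hμ hν ha hb hab, ?_⟩
  have hgμ := hg.integrable_of_mem_subProbMeasuresOn hK hμ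
  have hgν := hg.integrable_of_mem_subProbMeasuresOn hK hν
  dsimp only
  rw [integral_add_measure (hgμ.smul_measure ENNReal.ofReal_ne_top)
    (hgν.smul_measure ENNReal.ofReal_ne_top), integral_smul_measure, integral_smul_measure,
    ENNReal.toReal_ofReal ha, ENNReal.toReal_ofReal hb]

theorem image_integral_subProbMeasuresOn [FiniteDimensional ℝ E] (hK : IsCompact K)
    (hg : ContinuousOn g K) :
    (fun μ => ∫ x, g x ∂μ) '' subProbMeasuresOn K = convexHull ℝ (insert 0 (g '' K)) := by
  refine Subset.antisymm ?_ (convexHull_min ?_ (convex_image_integral_subProbMeasuresOn hK hg))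
  · rintro _ ⟨μ, hμ, rfl⟩
    have := isFiniteMeasure_of_mem_subProbMeasuresOn hμ
    refine (convex_convexHull ℝ _).integral_mem_of_measure_univ_le_one
      ((hK.image_of_continuousOn hg).insert 0).convexHull.isClosed
      (subset_convexHull ℝ _ (mem_insert _ _))
      (measure_univ_le_one_of_mem_subProbMeasuresOn hμ)
      (hg.integrable_of_mem_subProbMeasuresOn hK hμ) ?_
    filter_upwards [mem_ae_iff.2 hμ.1] with x hx
    exact subset_convexHull ℝ _ (mem_insert_of_mem _ (mem_image_of_mem g hx))
  · rintro _ (rfl | ⟨x, hx, rfl⟩)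
    · exact ⟨0, zero_mem_subProbMeasuresOn, integral_zero_measure g⟩
    · exact ⟨_, dirac_mem_subProbMeasuresOn hK.measurableSet hx, integral_dirac g x⟩

end Moments

section Duality

variable {F : Type*} {S : Set (F × ℝ)} {b : F}

theorem bddBelow_fiber_of_isCompact [TopologicalSpace F] (hS : IsCompact S) :
    BddBelow {s | (b, s) ∈ S} :=
  (hS.image continuous_snd).bddBelow.mono fun _ hs => mem_image_of_mem Prod.snd hs

theorem csInf_fiber_mem_of_isCompact [TopologicalSpace F] [T2Space F] (hS : IsCompact S)
    (hb : ∃ s, (b, s) ∈ S) : sInf {s | (b, s) ∈ S} ∈ {s | (b, s) ∈ S} :=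
  IsClosed.csInf_mem (hS.isClosed.preimage (Continuous.prodMk_right b)) hb
    (bddBelow_fiber_of_isCompact hS)

theorem exists_affine_minorant_of_notMem [NormedAddCommGroup F] [NormedSpace ℝ F]
    (hS : Convex ℝ S) (hSc : IsClosed S) {r s : ℝ} (hs : (b, s) ∈ S) (hr : (b, r) ∉ S)
    (hrs : r < s) :
    ∃ (ℓ : StrongDual ℝ F) (t : ℝ), (∀ p ∈ S, ℓ p.1 - t < p.2) ∧ r < ℓ b - t := by
  obtain ⟨φ, u, hφr, hφS⟩ := geometric_hahn_banach_point_closed hS hSc hr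
  have hsplit : ∀ x c, φ (x, c) = φ (x, 0) + c * φ (0, 1) := fun x c => by
    rw [show ((x, c) : F × ℝ) = (x, 0) + c • (0, 1) by simp, map_add, map_smul, smul_eq_mul]
  set L := φ (0, 1)
  have hL : 0 < L := by
    have := hφS _ hs
    rw [hsplit] at this hφr
    nlinarith
  set ℓ : StrongDual ℝ F := -(L⁻¹ • φ.comp (.inl ℝ F ℝ))
  have hgap : ∀ x c, c - (ℓ x - -u / L) = (φ (x, c) - u) / L := fun x c => by
    rw [hsplit]
    simp only [ℓ, neg_apply, smul_apply, ContinuousLinearMap.comp_apply,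
      ContinuousLinearMap.inl_apply, smul_eq_mul]
    field_simp
    ring
  refine ⟨ℓ, -u / L, fun p hp => ?_, ?_⟩
  · have := hgap p.1 p.2
    have := div_pos (sub_pos.2 (hφS p hp)) hL
    linarith
  · have := hgap b r
    have := div_neg_of_neg_of_pos (sub_neg.2 hφr) hL
    linarith

end Duality

theorem sSup_dual_eq_sInf_fiber {ι : Type*} [Fintype ι] {S : Set ((ι → ℝ) × ℝ)} {b : ι → ℝ}
    (hS : IsCompact S) (hSconv : Convex ℝ S) (hb : ∃ s, (b, s) ∈ S) :
    sSup {v | ∃ (y : ι → ℝ) (t : ℝ), (∀ p ∈ S, 0 ≤ p.2 - ∑ i, y i * p.1 i + t) ∧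
      v = ∑ i, y i * b i - t} = sInf {s | (b, s) ∈ S} := by
  classical
  set v₀ := sInf {s | (b, s) ∈ S}
  set D := {v | ∃ (y : ι → ℝ) (t : ℝ), (∀ p ∈ S, 0 ≤ p.2 - ∑ i, y i * p.1 i + t) ∧
      v = ∑ i, y i * b i - t}
  have hv₀ : (b, v₀) ∈ S := csInf_fiber_mem_of_isCompact hS hb
  have hstrong : ∀ w < v₀, ∃ v ∈ D, w < v := by
    intro w hw
    have hwS : w ∉ {s | (b, s) ∈ S} := notMem_of_lt_csInf hw (bddBelow_fiber_of_isCompact hS)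
    obtain ⟨ℓ, t, hℓS, hwℓ⟩ := exists_affine_minorant_of_notMem hSconv hS.isClosed hv₀ hwS hw
    have hℓ : ∀ x, ℓ x = ∑ i, ℓ (fun j => if i = j then 1 else 0) * x i := fun x => by
      simpa only [ContinuousLinearMap.coe_coe, smul_eq_mul, mul_comm] using
        ℓ.toLinearMap.pi_apply_eq_sum_univ x
    exact ⟨_, ⟨_, t, fun p hp => by linarith [hℓS p hp, hℓ p.1], rfl⟩, by rwa [← hℓ]⟩
  refine csSup_eq_of_forall_le_of_forall_lt_exists_gt ?_ ?_ hstrong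
  · obtain ⟨v, hv, -⟩ := hstrong (v₀ - 1) (sub_one_lt v₀)
    exact ⟨v, hv⟩
  · rintro _ ⟨y, t, hyt, rfl⟩
    linarith [hyt _ hv₀]

section MomentProblem

variable {α ι : Type*}

def momentMap (f : ι → α → ℝ) (f0 : α → ℝ) (x : α) : (ι → ℝ) × ℝ := (fun i => f i x, f0 x)

theorem continuousOn_momentMap [TopologicalSpace α] {K : Set α} {f : ι → α → ℝ} {f0 : α → ℝ}
    (hf : ∀ i, ContinuousOn (f i) K) (hf0 : ContinuousOn f0 K) :
    ContinuousOn (momentMap f f0) K :=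
  (continuousOn_pi.2 hf).prodMk hf0

variable [Fintype ι]

theorem convex_setOf_affine_nonneg (y : ι → ℝ) (t : ℝ) :
    Convex ℝ {p : (ι → ℝ) × ℝ | 0 ≤ p.2 - ∑ i, y i * p.1 i + t} := by
  let φ : (ι → ℝ) × ℝ →ₗ[ℝ] ℝ :=
    LinearMap.snd ℝ _ ℝ - (∑ i, y i • LinearMap.proj i) ∘ₗ LinearMap.fst ℝ _ ℝ
  have : {p : (ι → ℝ) × ℝ | 0 ≤ p.2 - ∑ i, y i * p.1 i + t} = {p | -t ≤ φ p} := by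
    ext p
    simp [φ, sub_add_eq_add_sub]
  rw [this]
  exact convex_halfSpace_ge φ.isLinear _

theorem forall_mem_convexHull_momentMap_iff {K : Set α} {f : ι → α → ℝ} {f0 : α → ℝ}
    (y : ι → ℝ) (t : ℝ) :
    (∀ p ∈ convexHull ℝ (insert 0 (momentMap f f0 '' K)), 0 ≤ p.2 - ∑ i, y i * p.1 i + t) ↔
      0 ≤ t ∧ ∀ x ∈ K, 0 ≤ f0 x - ∑ i, y i * f i x + t := by
  constructor
  · intro h
    refine ⟨by simpa using h 0 (subset_convexHull ℝ _ (mem_insert _ _)), fun x hx => ?_⟩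
    exact h _ (subset_convexHull ℝ _ (mem_insert_of_mem _ (mem_image_of_mem _ hx)))
  · rintro ⟨ht, hK⟩ p hp
    refine convexHull_min ?_ (convex_setOf_affine_nonneg y t) hp
    rintro _ (rfl | ⟨x, hx, rfl⟩)
    exacts [by simpa using ht, hK x hx]

variable [MeasurableSpace α] [TopologicalSpace α] [OpensMeasurableSpace α] [T2Space α]
  {K : Set α} {f : ι → α → ℝ} {f0 : α → ℝ}

theorem integral_momentMap (hK : IsCompact K) (hf : ∀ i, ContinuousOn (f i) K)
    (hf0 : ContinuousOn f0 K) {μ : Measure α} (hμ : μ ∈ subProbMeasuresOn K) :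
    ∫ x, momentMap f f0 x ∂μ = (fun i => ∫ x, f i x ∂μ, ∫ x, f0 x ∂μ) := by
  have hfμ i := (hf i).integrable_of_mem_subProbMeasuresOn hK hμ
  simp only [momentMap]
  rw [integral_pair (Integrable.of_eval hfμ)
    (hf0.integrable_of_mem_subProbMeasuresOn hK hμ)]
  ext i <;> simp [eval_integral hfμ]

theorem image_integral_feasible_eq (hK : IsCompact K) (hf : ∀ i, ContinuousOn (f i) K)
    (hf0 : ContinuousOn f0 K) (b : ι → ℝ) :
    (fun μ => ∫ x, f0 x ∂μ) '' {μ : Measure α | IsFiniteMeasure μ ∧ μ Kᶜ = 0 ∧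
      (∀ i, ∫ x, f i x ∂μ = b i) ∧ μ K ≤ 1} =
      {s | (b, s) ∈ convexHull ℝ (insert 0 (momentMap f f0 '' K))} := by
  ext s
  rw [mem_ofPred_eq, ← image_integral_subProbMeasuresOn hK (continuousOn_momentMap hf hf0)]
  constructor
  · rintro ⟨μ, ⟨-, hμK, hμb, hμ1⟩, rfl⟩
    refine ⟨μ, ⟨hμK, hμ1⟩, ?_⟩
    dsimp only
    rw [integral_momentMap hK hf hf0 ⟨hμK, hμ1⟩, funext hμb]
  · rintro ⟨μ, hμ, hμs⟩
    dsimp only at hμs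
    rw [integral_momentMap hK hf hf0 hμ, Prod.mk.injEq, funext_iff] at hμs
    exact ⟨μ, ⟨isFiniteMeasure_of_mem_subProbMeasuresOn hμ, hμ.1, hμs.1, hμ.2⟩, hμs.2⟩

end MomentProblem

/-- **Theorem (strong duality and attainment for the GMP).**
If the generalized moment problem over a compact set `K ⊆ ℝⁿ` is feasible, then its
infimum is attained by some feasible measure, and the primal value equals the dual value. -/
theorem gmp_attained_and_strong_duality
    {n m : ℕ} (K : Set (Fin n → ℝ)) (hK : IsCompact K)
    (f0 : (Fin n → ℝ) → ℝ) (f : Fin m → (Fin n → ℝ) → ℝ) (b : Fin m → ℝ)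
    (hf0 : ContinuousOn f0 K) (hf : ∀ i, ContinuousOn (f i) K)
    (Feas : Set (Measure (Fin n → ℝ)))
    (hFeas : Feas = {μ : Measure (Fin n → ℝ) | IsFiniteMeasure μ ∧ μ Kᶜ = 0 ∧
      (∀ i, ∫ x, f i x ∂μ = b i) ∧ μ K ≤ 1})
    (hfeas : Feas.Nonempty)
    (val : ℝ) (hval : val = sInf ((fun μ => ∫ x, f0 x ∂μ) '' Feas))
    (val' : ℝ)
    (hval' : val' = sSup {v : ℝ | ∃ (y : Fin m → ℝ) (t : ℝ), 0 ≤ t ∧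
      (∀ x ∈ K, 0 ≤ f0 x - ∑ i, y i * f i x + t) ∧ v = ∑ i, y i * b i - t}) :
    (∃ μ ∈ Feas, ∫ x, f0 x ∂μ = val) ∧ val = val' := by
  subst hFeas hval hval'
  set S := convexHull ℝ (insert 0 (momentMap f f0 '' K))
  have hvalues := image_integral_feasible_eq hK hf hf0 b
  have hS : IsCompact S :=
    ((hK.image_of_continuousOn (continuousOn_momentMap hf hf0)).insert 0).convexHull
  have hb : {s | (b, s) ∈ S}.Nonempty := hvalues ▸ hfeas.image _
  have hattained := csInf_fiber_mem_of_isCompact hS hb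
  rw [← hvalues] at hattained
  refine ⟨hattained, ?_⟩
  rw [hvalues, ← sSup_dual_eq_sInf_fiber hS (convex_convexHull ℝ _) hb]
  simp only [S, forall_mem_convexHull_momentMap_iff, and_assoc]
end

section
/- Let f = Σ_{|α|=d} f_α x^α be a homogeneous polynomial of degree d in n variables, let ε = min_{x ∈ Δ_{n−1}} f(x), and assume ε > 0. If k is an integer with k > (d(d−1)/2)·(B(f)/ε) − d, then all coefficients of the polynomial (x_1 + ... + x_n)^k · f(x) are positive. -/
/-!
Write `N = d + k`, `β! = ∏ βᵢ!` and `(N)_d = N(N-1)⋯(N-d+1)`. Expanding `(∑ xᵢ)^k` by the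
multinomial theorem gives `β! · coeff_β((∑ xᵢ)^k · x^m) = k! ∏ (βᵢ)_{mᵢ} ≤ k! β^m` for `|m| = d`,
so the linear functional `p ↦ k! p(β) - β! coeff_β((∑ xᵢ)^k p)` is nonnegative on polynomials
with nonnegative coefficients. The definition of `B = B(f)` makes the coefficients of
`B (∑ xᵢ)^d - f` nonnegative, and on `(∑ xᵢ)^d` the functional equals `k!(N^d - (N)_d)`.
Together with `f(β) ≥ N^d ε` (homogeneity) this gives
`β! coeff_β((∑ xᵢ)^k f) ≥ k!(N^d ε - B(N^d - (N)_d))`, and `N(N^d - (N)_d) ≤ C(d,2) N^d` makes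
the right-hand side positive as soon as `N ε > C(d,2) B`, which is the hypothesis on `k`.
-/

open MvPolynomial

/-- For a homogeneous polynomial `f = ∑_{|α| = d} f_α x^α` of degree `d`,
`B(f) = max_{|α| = d} (α₁!⋯αₙ!/d!)·f_α`. -/
noncomputable def Bcoef {n : ℕ} (d : ℕ) (f : MvPolynomial (Fin n) ℝ) : ℝ :=
  sSup {c : ℝ | ∃ α : Fin n →₀ ℕ, (∑ i, α i) = d ∧
    c = ((∏ i, Nat.factorial (α i) : ℕ) : ℝ) / (Nat.factorial d : ℝ) * coeff α f}

open Finset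
open scoped Nat

namespace Nat

theorem pow_succ_le_mul_descFactorial_add (N : ℕ) :
    ∀ d : ℕ, N ^ (d + 1) ≤ N * N.descFactorial d + d.choose 2 * N ^ d
  | 0 => by simp
  | d + 1 => by
    have step : N * N.descFactorial d ≤ N.descFactorial (d + 1) + d * N ^ d := by
      rw [descFactorial_succ]
      calc N * N.descFactorial d ≤ (N - d + d) * N.descFactorial d :=
            Nat.mul_le_mul_right _ (by omega)
        _ = (N - d) * N.descFactorial d + d * N.descFactorial d := add_mul _ _ _
        _ ≤ _ := by gcongr; exact descFactorial_le_pow N d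
    calc N ^ (d + 1 + 1) = N * N ^ (d + 1) := _root_.pow_succ' _ _
      _ ≤ N * (N * N.descFactorial d + d.choose 2 * N ^ d) :=
          Nat.mul_le_mul_left N (pow_succ_le_mul_descFactorial_add N d)
      _ = N * (N * N.descFactorial d) + d.choose 2 * N ^ (d + 1) := by ring
      _ ≤ N * (N.descFactorial (d + 1) + d * N ^ d) + d.choose 2 * N ^ (d + 1) := by gcongr
      _ = N * N.descFactorial (d + 1) + (d + 1).choose 2 * N ^ (d + 1) := by
          rw [choose_succ_succ, choose_one_right]; ring

theorem pow_mul_sub_mul_pow_sub_descFactorial_pos {N d : ℕ} (hN : 0 < N) {B ε : ℝ}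
    (hε : 0 < ε) (hB : d.choose 2 * B < N * ε) :
    0 < (N : ℝ) ^ d * ε - B * ((N : ℝ) ^ d - N.descFactorial d) := by
  have hP : (0 : ℝ) < (N : ℝ) ^ d := by positivity
  have hD : (N.descFactorial d : ℝ) ≤ (N : ℝ) ^ d := by exact_mod_cast descFactorial_le_pow N d
  have hND : (N : ℝ) * N ^ d ≤ N * N.descFactorial d + d.choose 2 * N ^ d := by
    rw [← _root_.pow_succ']; exact_mod_cast pow_succ_le_mul_descFactorial_add N d
  rcases le_or_gt B 0 with hB0 | hB0
  · nlinarith [mul_pos hP hε]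
  · have hNpos : (0 : ℝ) < N := by exact_mod_cast hN
    refine pos_of_mul_pos_right (a := (N : ℝ)) ?_ hNpos.le
    nlinarith [mul_pos hP (sub_pos.2 hB), mul_le_mul_of_nonneg_left hND hB0.le]

end Nat

namespace Finsupp

variable {σ : Type*} [Fintype σ]

theorem multinomial_tsub_mul_prod_factorial {β m : σ →₀ ℕ} (hm : m ≤ β) :
    (β - m).multinomial * ∏ i, (β i)! = (∑ i, (β - m) i)! * ∏ i, (β i).descFactorial (m i) := by
  rw [multinomial_eq_of_support_subset (subset_univ _), ← Nat.multinomial_spec]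
  simp only [tsub_apply, ← Nat.factorial_mul_descFactorial (hm _), prod_mul_distrib]
  ring

end Finsupp

namespace MvPolynomial

variable {σ R : Type*}

theorem IsHomogeneous.eval_smul [CommSemiring R] {p : MvPolynomial σ R} {n : ℕ}
    (hp : p.IsHomogeneous n) (r : R) (x : σ → R) :
    eval (r • x) p = r ^ n * eval x p := by
  simp only [eval_eq, mul_sum]
  refine sum_congr rfl fun m hm => ?_
  simp only [Pi.smul_apply, smul_eq_mul, mul_pow, prod_mul_distrib, prod_pow_eq_pow_sum,
    ← hp.degree_eq_sum_deg_support hm]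
  ring

variable [Fintype σ]

theorem coeff_sum_X_pow_mul_prod_factorial [CommSemiring R] {β : σ →₀ ℕ} {N : ℕ}
    (hβ : ∑ i, β i = N) :
    coeff β ((∑ i, X i : MvPolynomial σ R) ^ N) * ∏ i, ((β i)! : R) = N ! := by
  rw [coeff_sum_X_pow_of_fintype, Finsupp.sum_fintype _ _ (fun _ => rfl), if_pos hβ,
    Finsupp.multinomial_eq_of_support_subset (subset_univ _), ← hβ, ← Nat.multinomial_spec]
  push_cast
  ring

variable [CommSemiring R] [PartialOrder R] [IsOrderedRing R]

theorem coeff_sum_X_pow_mul_monomial_mul_prod_factorial_le (β m : σ →₀ ℕ) (k : ℕ) {c : R}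
    (hc : 0 ≤ c) :
    coeff β ((∑ i, X i) ^ k * monomial m c) * ∏ i, ((β i)! : R)
      ≤ k ! * eval (fun i => (β i : R)) (monomial m c) := by
  rw [coeff_mul_monomial', eval_monomial, Finsupp.prod_fintype _ _ (fun _ => pow_zero _)]
  split_ifs with hmβ
  · rw [coeff_sum_X_pow_of_fintype, Finsupp.sum_fintype _ _ (fun _ => rfl)]
    split_ifs with hk
    · have hℕ : (β - m).multinomial * ∏ i, (β i)! ≤ k ! * ∏ i, β i ^ m i := by
        rw [Finsupp.multinomial_tsub_mul_prod_factorial hmβ, hk]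
        exact Nat.mul_le_mul_left _ (prod_le_prod' fun i _ => Nat.descFactorial_le_pow _ _)
      have hR : ((β - m).multinomial : R) * ∏ i, ((β i)! : R) ≤ k ! * ∏ i, (β i : R) ^ m i := by
        simpa using Nat.mono_cast (α := R) hℕ
      calc ((β - m).multinomial : R) * c * ∏ i, ((β i)! : R)
          = c * (((β - m).multinomial : R) * ∏ i, ((β i)! : R)) := by ring
        _ ≤ c * (k ! * ∏ i, (β i : R) ^ m i) := mul_le_mul_of_nonneg_left hR hc
        _ = _ := by ring
    · rw [Nat.cast_zero, zero_mul, zero_mul]; positivity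
  · rw [zero_mul]; positivity

theorem coeff_sum_X_pow_mul_mul_prod_factorial_le (β : σ →₀ ℕ) (k : ℕ) {p : MvPolynomial σ R}
    (hp : ∀ m, 0 ≤ coeff m p) :
    coeff β ((∑ i, X i) ^ k * p) * ∏ i, ((β i)! : R) ≤ k ! * eval (fun i => (β i : R)) p := by
  conv_lhs => rw [p.as_sum]
  conv_rhs => rw [p.as_sum]
  rw [mul_sum, coeff_sum, sum_mul, map_sum, mul_sum]
  exact sum_le_sum fun m _ => coeff_sum_X_pow_mul_monomial_mul_prod_factorial_le β m k (hp m)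

theorem le_coeff_sum_X_pow_mul_mul_prod_factorial {d k : ℕ} {p : MvPolynomial σ ℝ} {B : ℝ}
    (hB : ∀ m, 0 ≤ coeff m (C B * (∑ i, X i) ^ d - p)) {β : σ →₀ ℕ} (hβ : ∑ i, β i = d + k) :
    k ! * (eval (fun i => (β i : ℝ)) p - B * (((d + k : ℕ) : ℝ) ^ d - (d + k).descFactorial d))
      ≤ coeff β ((∑ i, X i) ^ k * p) * ∏ i, ((β i)! : ℝ) := by
  have h := coeff_sum_X_pow_mul_mul_prod_factorial_le β k hB
  have hfac : coeff β ((∑ i, X i : MvPolynomial σ ℝ) ^ (k + d)) * ∏ i, ((β i)! : ℝ)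
      = k ! * (d + k).descFactorial d := by
    rw [coeff_sum_X_pow_mul_prod_factorial (by omega), ← Nat.cast_mul, add_comm k d,
      ← Nat.factorial_mul_descFactorial (Nat.le_add_right d k), Nat.add_sub_cancel_left]
  have heval : eval (fun i => (β i : ℝ)) (∑ i, X i) = ((d + k : ℕ) : ℝ) := by
    simp [← hβ]
  rw [mul_sub, coeff_sub, mul_left_comm, coeff_C_mul, ← pow_add, map_sub, map_mul, eval_C,
    map_pow, heval] at h
  linear_combination h - B * hfac

theorem sInf_eval_stdSimplex_le (p : MvPolynomial σ ℝ) {x : σ → ℝ} (hx : x ∈ stdSimplex ℝ σ) :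
    sInf ((fun y => eval y p) '' stdSimplex ℝ σ) ≤ eval x p :=
  csInf_le ((isCompact_stdSimplex ℝ σ).image (continuous_eval p)).bddBelow ⟨x, hx, rfl⟩

theorem IsHomogeneous.pow_sum_mul_sInf_le_eval {p : MvPolynomial σ ℝ} {d : ℕ}
    (hp : p.IsHomogeneous d) {x : σ → ℝ} (hx : ∀ i, 0 ≤ x i) (hsum : 0 < ∑ i, x i) :
    (∑ i, x i) ^ d * sInf ((fun y => eval y p) '' stdSimplex ℝ σ) ≤ eval x p := by
  set s := ∑ i, x i
  have hmem : s⁻¹ • x ∈ stdSimplex ℝ σ :=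
    ⟨fun i => by simpa using mul_nonneg (inv_nonneg.2 hsum.le) (hx i),
      by simp [← mul_sum, inv_mul_cancel₀ hsum.ne', s]⟩
  calc s ^ d * sInf ((fun y => eval y p) '' stdSimplex ℝ σ) ≤ s ^ d * eval (s⁻¹ • x) p := by
        gcongr; exact sInf_eval_stdSimplex_le p hmem
    _ = eval x p := by
        rw [← hp.eval_smul, smul_smul, mul_inv_cancel₀ hsum.ne', one_smul]

theorem coeff_le_Bcoef_mul_multinomial {n d : ℕ} (f : MvPolynomial (Fin n) ℝ) {m : Fin n →₀ ℕ}
    (hm : ∑ i, m i = d) :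
    coeff m f ≤ Bcoef d f * m.multinomial := by
  set g : (Fin n →₀ ℕ) → ℝ := fun α =>
    ((∏ i, Nat.factorial (α i) : ℕ) : ℝ) / (Nat.factorial d : ℝ) * coeff α f
  have hbdd : BddAbove {c : ℝ | ∃ α : Fin n →₀ ℕ, (∑ i, α i) = d ∧ c = g α} := by
    refine ((finsuppAntidiag univ d).finite_toSet.image g).bddAbove.mono ?_
    rintro c ⟨α, hα, rfl⟩
    exact ⟨α, by simpa using hα, rfl⟩
  have hgm : g m ≤ Bcoef d f := le_csSup hbdd ⟨m, hm, rfl⟩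
  have hspec : (m.multinomial : ℝ) * ∏ i, ((m i)! : ℝ) = d ! := by
    rw [Finsupp.multinomial_eq_of_support_subset (subset_univ _), ← hm, ← Nat.multinomial_spec]
    push_cast; ring
  have hprod : (0 : ℝ) < ∏ i, ((m i)! : ℝ) := by positivity
  calc coeff m f = m.multinomial * g m := by
        simp only [g]; push_cast; field_simp; rw [mul_assoc, hspec]
    _ ≤ m.multinomial * Bcoef d f := by gcongr
    _ = Bcoef d f * m.multinomial := mul_comm _ _

theorem IsHomogeneous.coeff_C_Bcoef_mul_sum_X_pow_sub_nonneg {n d : ℕ}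
    {f : MvPolynomial (Fin n) ℝ} (hf : f.IsHomogeneous d) (m : Fin n →₀ ℕ) :
    0 ≤ coeff m (C (Bcoef d f) * (∑ i, X i) ^ d - f) := by
  rw [coeff_sub, coeff_C_mul, coeff_sum_X_pow_of_fintype, Finsupp.sum_fintype _ _ (fun _ => rfl)]
  split_ifs with hm
  · linarith [coeff_le_Bcoef_mul_multinomial f hm]
  · rw [hf.coeff_eq_zero (by rwa [Finsupp.degree_eq_sum]), Nat.cast_zero, mul_zero, sub_zero]

end MvPolynomial

theorem polya_positivstellensatz_quantitative_general
    {n d : ℕ} (f : MvPolynomial (Fin n) ℝ) (hf : f.IsHomogeneous d)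
    (ε : ℝ)
    (hε : ε = sInf ((fun x => eval x f) ''
      {x : Fin n → ℝ | (∀ i, 0 ≤ x i) ∧ ∑ i, x i = 1}))
    (hεpos : 0 < ε)
    (k : ℕ)
    (hk : (k : ℝ) > ((d : ℝ) * ((d : ℝ) - 1) / 2) * (Bcoef d f / ε) - (d : ℝ)) :
    ∀ β : Fin n →₀ ℕ, (∑ i, β i) = d + k →
      0 < coeff β ((∑ i, X i) ^ k * f) := by
  intro β hβ
  have hN : 0 < d + k := by
    by_contra h
    obtain ⟨rfl, rfl⟩ : d = 0 ∧ k = 0 := by omega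
    norm_num at hk
  have hβR : ∑ i, (β i : ℝ) = (d + k : ℕ) := by exact_mod_cast hβ
  have heval : ((d + k : ℕ) : ℝ) ^ d * ε ≤ eval (fun i => (β i : ℝ)) f := by
    rw [hε, ← hβR]
    exact hf.pow_sum_mul_sInf_le_eval (fun i => Nat.cast_nonneg _)
      (by rw [hβR]; exact_mod_cast hN)
  have hkε : (d.choose 2 : ℝ) * Bcoef d f < (d + k : ℕ) * ε := by
    rw [Nat.cast_choose_two, Nat.cast_add]
    have := mul_lt_mul_of_pos_right hk hεpos
    rw [sub_mul, mul_assoc, div_mul_cancel₀ _ hεpos.ne'] at this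
    linarith
  have hmargin := Nat.pow_mul_sub_mul_pow_sub_descFactorial_pos hN hεpos hkε
  have hlower := le_coeff_sum_X_pow_mul_mul_prod_factorial
    hf.coeff_C_Bcoef_mul_sum_X_pow_sub_nonneg hβ
  have hprod : (0 : ℝ) < ∏ i, ((β i)! : ℝ) := by positivity
  refine (mul_pos_iff_of_pos_right hprod).1 (lt_of_lt_of_le ?_ hlower)
  exact mul_pos (by positivity) (hmargin.trans_le (by linarith))

/-- **Theorem (quantitative Pólya Positivstellensatz).**
Let `f` be homogeneous of degree `d` with minimum `ε > 0` over the standard simplex.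
If `k > (d(d-1)/2)·(B(f)/ε) - d`, then all coefficients of `(x₁ + ⋯ + xₙ)^k f` are
positive. -/
theorem polya_positivstellensatz_quantitative
    {n d : ℕ} (hn : 0 < n) (f : MvPolynomial (Fin n) ℝ) (hf : f.IsHomogeneous d)
    (ε : ℝ)
    (hε : ε = sInf ((fun x => eval x f) ''
      {x : Fin n → ℝ | (∀ i, 0 ≤ x i) ∧ ∑ i, x i = 1}))
    (hεpos : 0 < ε)
    (k : ℕ)
    (hk : (k : ℝ) > ((d : ℝ) * ((d : ℝ) - 1) / 2) * (Bcoef d f / ε) - (d : ℝ)) :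
    ∀ β : Fin n →₀ ℕ, (∑ i, β i) = d + k →
      0 < coeff β ((∑ i, X i) ^ k * f) :=
  polya_positivstellensatz_quantitative_general f hf ε hε hεpos k hk
end

section
/- Let L be a linear functional on the real polynomial ring in n variables satisfying L(x^α) ≥ 0 for all multi-indices α, L(1) ≤ 1, and L( p·(1 − x_1 − ... − x_n) ) = 0 for every polynomial p. Then for every polynomial f, |L(f)| ≤ sup_{x ∈ Δ_{n−1}} |f(x)|; in particular L is bounded (continuous) with respect to the supremum norm on the simplex. -/
/-!
Pólya's argument. Modulo `1 - ∑ xᵢ`, multiplying each monomial `x^α` of `f` by `(∑ xᵢ)^(N - |α|)`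
turns `f` into a form of degree `N` whose coefficient at `x^g` is `multinomial g * f_{1/N}(g/N)`,
where `f_t` is `f` with every `x^α` replaced by the normalised falling power
`∏ᵢ xᵢ(xᵢ - t)⋯(xᵢ - (αᵢ - 1)t) / ∏_{j < |α|} (1 - jt)`. Since `L` is nonnegative on monomials and
`∑_g multinomial g * L(x^g) = L 1 ≤ 1`, this gives `|L f| ≤ max_g |f_{1/N}(g/N)|`, and `f_t → f`
uniformly on the (compact) simplex as `t → 0`.
-/

open MvPolynomial Finset Filter Nat

theorem Nat.multinomial_add_mul_prod_descFactorial {ι : Type*} (s : Finset ι) (a k : ι → ℕ) :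
    multinomial s (a + k) * ∏ i ∈ s, (a i + k i).descFactorial (a i) =
      multinomial s k * (∑ i ∈ s, (a i + k i)).descFactorial (∑ i ∈ s, a i) := by
  have hfact : ∀ b c : ℕ, c ! * (b + c).descFactorial b = (b + c)! := fun b c => by
    simpa using factorial_mul_descFactorial (le_add_right b c)
  apply Nat.eq_of_mul_eq_mul_left (prod_pos fun i _ => (k i).factorial_pos)
  calc (∏ i ∈ s, (k i)!) * (multinomial s (a + k) * ∏ i ∈ s, (a i + k i).descFactorial (a i))
      = (∏ i ∈ s, (a i + k i)!) * multinomial s (a + k) := by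
        rw [← prod_congr rfl fun i _ => hfact (a i) (k i), prod_mul_distrib]; ring
    _ = (∑ i ∈ s, a i + ∑ i ∈ s, k i)! := by
        rw [← sum_add_distrib]; exact multinomial_spec s (a + k)
    _ = (∏ i ∈ s, (k i)!) *
          (multinomial s k * (∑ i ∈ s, (a i + k i)).descFactorial (∑ i ∈ s, a i)) := by
        rw [← mul_assoc, multinomial_spec, sum_add_distrib, hfact]

theorem Nat.cast_descFactorial_div_pow_eq_prod (m k : ℕ) {N : ℕ} (hN : N ≠ 0) :
    (m.descFactorial k : ℝ) / (N : ℝ) ^ k = ∏ j ∈ range k, ((m : ℝ) / N - j * (1 / N)) := by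
  rw [← descPochhammer_eval_eq_descFactorial, descPochhammer_eval_eq_prod_range,
    ← card_range k, ← prod_const, card_range, ← prod_div_distrib]
  refine prod_congr rfl fun j _ => ?_
  field_simp

section FallingPowers

variable {σ : Type*} [Fintype σ]

noncomputable def fallingMonomial (α : σ → ℕ) (t : ℝ) (x : σ → ℝ) : ℝ :=
  (∏ i, ∏ j ∈ range (α i), (x i - j * t)) / ∏ j ∈ range (∑ i, α i), (1 - j * t)

noncomputable def fallingEval (f : MvPolynomial σ ℝ) (t : ℝ) (x : σ → ℝ) : ℝ :=
  ∑ α ∈ f.support, coeff α f * fallingMonomial α t x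

theorem fallingEval_zero (f : MvPolynomial σ ℝ) (x : σ → ℝ) : fallingEval f 0 x = eval x f := by
  simp [fallingEval, fallingMonomial, eval_eq']

theorem fallingMonomial_one_div_natCast (α g : σ → ℕ) {N : ℕ} (hN : N ≠ 0) :
    fallingMonomial α (1 / N) (fun i => g i / N) =
      (∏ i, (g i).descFactorial (α i) : ℕ) / (N.descFactorial (∑ i, α i) : ℝ) := by
  have hnum : ∏ i, ∏ j ∈ range (α i), ((g i : ℝ) / N - j * (1 / N)) =
      (∏ i, (g i).descFactorial (α i) : ℕ) / (N : ℝ) ^ ∑ i, α i := by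
    simp_rw [← Nat.cast_descFactorial_div_pow_eq_prod _ _ hN, prod_div_distrib, prod_pow_eq_pow_sum,
      Nat.cast_prod]
  have hden : ∏ j ∈ range (∑ i, α i), (1 - j * (1 / N : ℝ)) =
      (N.descFactorial (∑ i, α i) : ℝ) / (N : ℝ) ^ ∑ i, α i := by
    rw [Nat.cast_descFactorial_div_pow_eq_prod _ _ hN, div_self (Nat.cast_ne_zero.2 hN)]
  rw [fallingMonomial, hnum, hden, div_div_div_cancel_right₀ (by positivity)]

theorem continuousOn_fallingMonomial (α : σ → ℕ) {d : ℕ} (hα : ∑ i, α i ≤ d) :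
    ContinuousOn (Function.uncurry (fallingMonomial α)) ({t : ℝ | d * t < 1} ×ˢ Set.univ) := by
  refine ContinuousOn.div (by fun_prop) (by fun_prop) fun p hp => prod_ne_zero_iff.2 fun j hj => ?_
  have hjd : (j : ℝ) ≤ d := by exact_mod_cast (mem_range.1 hj).le.trans hα
  have ht : d * p.1 < 1 := hp.1
  rcases le_or_gt p.1 0 with h | h <;> nlinarith

theorem eventually_forall_abs_fallingEval_sub_eval_lt (f : MvPolynomial σ ℝ) {ε : ℝ} (hε : 0 < ε) :
    ∀ᶠ N : ℕ in atTop, ∀ x ∈ stdSimplex ℝ σ, |fallingEval f (1 / N) x - eval x f| < ε := by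
  set s : Set ℝ := {t | f.totalDegree * t < 1}
  have hs : IsOpen s := isOpen_lt (by fun_prop) continuous_const
  have hcont : ContinuousOn (Function.uncurry (fallingEval f)) (s ×ˢ stdSimplex ℝ σ) := by
    refine (continuousOn_finsetSum _ fun α hα => ?_).mono (Set.prod_mono le_rfl (Set.subset_univ _))
    have hdeg : ∑ i, α i ≤ f.totalDegree := by
      simpa [Finsupp.sum_fintype] using le_totalDegree hα
    exact continuousOn_const.mul (continuousOn_fallingMonomial α hdeg)
  obtain ⟨v, hv, hvε⟩ := (isCompact_stdSimplex ℝ σ).mem_uniformity_of_prod hcont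
    (show (0 : ℝ) ∈ s by simp [s]) (Metric.dist_mem_uniformity hε)
  rw [hs.nhdsWithin_eq (by simp [s])] at hv
  filter_upwards [tendsto_one_div_atTop_nhds_zero_nat hv] with N hN x hx
  simpa [fallingEval_zero, Real.dist_eq] using hvε _ hN x hx

end FallingPowers

section PositiveFunctional

variable {σ : Type*} [Fintype σ] (L : MvPolynomial σ ℝ →ₗ[ℝ] ℝ)

theorem map_mul_sum_X_pow (hL : ∀ p : MvPolynomial σ ℝ, L (p * (1 - ∑ i, X i)) = 0)
    (p : MvPolynomial σ ℝ) (d : ℕ) : L (p * (∑ i, X i) ^ d) = L p := by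
  induction d with
  | zero => simp
  | succ d ih =>
    have h := hL (p * (∑ i, X i) ^ d)
    rw [mul_sub, mul_one, map_sub, sub_eq_zero, ih, mul_assoc, ← pow_succ] at h
    exact h.symm

theorem descFactorial_mul_map_prod_X_pow [DecidableEq σ]
    (hL : ∀ p : MvPolynomial σ ℝ, L (p * (1 - ∑ i, X i)) = 0) (α : σ → ℕ) {N : ℕ}
    (hα : ∑ i, α i ≤ N) :
    (N.descFactorial (∑ i, α i) : ℝ) * L (∏ i, X i ^ α i) =
      ∑ g ∈ piAntidiag univ N,
        ((multinomial univ g * ∏ i, (g i).descFactorial (α i) : ℕ) : ℝ) * L (∏ i, X i ^ g i) := by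
  -- Expand `x^α (∑ xᵢ)^(N - |α|)`; the `g` not of the form `α + k` carry `g i < α i` for some `i`,
  -- so their descending factorial vanishes.
  set shifted := (piAntidiag univ (N - ∑ i, α i)).map (addLeftEmbedding α)
  have hshift : shifted ⊆ piAntidiag univ N := by
    simp only [shifted, subset_iff, Finset.mem_map, mem_piAntidiag]
    rintro _ ⟨k, ⟨hk, -⟩, rfl⟩
    refine ⟨?_, by simp⟩
    rw [addLeftEmbedding_apply, show ∑ i, (α + k) i = _ from sum_add_distrib, hk]
    omega
  have hvanish : ∀ g ∈ piAntidiag univ N, g ∉ shifted →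
      ((multinomial univ g * ∏ i, (g i).descFactorial (α i) : ℕ) : ℝ) * L (∏ i, X i ^ g i) = 0 := by
    intro g hg hgk
    obtain ⟨i, hi⟩ : ∃ i, g i < α i := by
      by_contra! hαg
      refine hgk (Finset.mem_map.2 ⟨g - α, mem_piAntidiag.2 ⟨?_, by simp⟩, funext fun i => ?_⟩)
      · rw [show ∑ i, (g - α) i = _ from sum_tsub_distrib _ fun i _ => hαg i,
          (mem_piAntidiag.1 hg).1]
      · simp [Nat.add_sub_cancel' (hαg i)]
    rw [prod_eq_zero (mem_univ i) (descFactorial_eq_zero_iff_lt.2 hi)]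
    simp
  rw [← sum_subset hshift hvanish, sum_map, ← map_mul_sum_X_pow L hL _ (N - ∑ i, α i),
    sum_pow_eq_sum_piAntidiag, mul_sum, map_sum, mul_sum]
  refine sum_congr rfl fun k hk => ?_
  have hk : ∑ i, (α i + k i) = N := by
    rw [sum_add_distrib, (mem_piAntidiag.1 hk).1]; omega
  have hcoeff := Nat.multinomial_add_mul_prod_descFactorial univ α k
  rw [hk] at hcoeff
  have hpoly : (∏ i, X i ^ α i) * ((multinomial univ k : MvPolynomial σ ℝ) * ∏ i, X i ^ k i) =
      (multinomial univ k : ℝ) • ∏ i, X i ^ (α + k) i := by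
    rw [Algebra.smul_def, map_natCast]
    simp only [Pi.add_apply, pow_add, prod_mul_distrib]
    ring
  rw [hpoly, map_smul, smul_eq_mul, ← mul_assoc, ← Nat.cast_mul, mul_comm (N.descFactorial _),
    ← hcoeff]
  rfl

theorem map_prod_X_pow_eq_sum_fallingMonomial [DecidableEq σ]
    (hL : ∀ p : MvPolynomial σ ℝ, L (p * (1 - ∑ i, X i)) = 0) (α : σ → ℕ) {N : ℕ}
    (hα : ∑ i, α i ≤ N) (hN : N ≠ 0) :
    L (∏ i, X i ^ α i) = ∑ g ∈ piAntidiag univ N, (multinomial univ g : ℝ) *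
      fallingMonomial α (1 / N) (fun i => g i / N) * L (∏ i, X i ^ g i) := by
  have hdesc : (N.descFactorial (∑ i, α i) : ℝ) ≠ 0 :=
    Nat.cast_ne_zero.2 (descFactorial_pos.2 hα).ne'
  rw [← mul_right_inj' hdesc, descFactorial_mul_map_prod_X_pow L hL α hα, mul_sum]
  refine sum_congr rfl fun g _ => ?_
  rw [fallingMonomial_one_div_natCast α g hN]
  push_cast
  field_simp

theorem map_eq_sum_fallingEval [DecidableEq σ]
    (hL : ∀ p : MvPolynomial σ ℝ, L (p * (1 - ∑ i, X i)) = 0) (f : MvPolynomial σ ℝ) {N : ℕ}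
    (hf : f.totalDegree ≤ N) (hN : N ≠ 0) :
    L f = ∑ g ∈ piAntidiag univ N,
      (multinomial univ g : ℝ) * fallingEval f (1 / N) (fun i => g i / N) * L (∏ i, X i ^ g i) := by
  have hmono : ∀ α ∈ f.support, L (monomial α (coeff α f)) = coeff α f * L (∏ i, X i ^ α i) := by
    intro α _
    rw [monomial_eq, Finsupp.prod_fintype _ _ fun _ => pow_zero _, ← smul_eq_C_mul, map_smul,
      smul_eq_mul]
  conv_lhs => rw [f.as_sum, map_sum]
  rw [sum_congr rfl hmono]
  simp_rw [fallingEval, mul_sum, sum_mul]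
  rw [sum_comm]
  refine sum_congr rfl fun α hα => ?_
  have hdeg : ∑ i, α i ≤ N := by
    simpa [Finsupp.sum_fintype] using (le_totalDegree hα).trans hf
  rw [map_prod_X_pow_eq_sum_fallingMonomial L hL α hdeg hN, mul_sum]
  refine sum_congr rfl fun g _ => by ring

theorem abs_map_le_mul_map_one [DecidableEq σ]
    (hpos : ∀ α : σ →₀ ℕ, 0 ≤ L (monomial α (1 : ℝ)))
    (hL : ∀ p : MvPolynomial σ ℝ, L (p * (1 - ∑ i, X i)) = 0) (f : MvPolynomial σ ℝ) {N : ℕ}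
    (hf : f.totalDegree ≤ N) (hN : N ≠ 0) {B : ℝ}
    (hB : ∀ g ∈ piAntidiag univ N, |fallingEval f (1 / N) (fun i => g i / N)| ≤ B) :
    |L f| ≤ B * L 1 := by
  have hw : ∀ g : σ → ℕ, 0 ≤ L (∏ i, X i ^ g i) := fun g => by
    simpa [monomial_eq, Finsupp.prod_fintype] using hpos (Finsupp.equivFunOnFinite.symm g)
  have hone : L 1 = ∑ g ∈ piAntidiag univ N, (multinomial univ g : ℝ) * L (∏ i, X i ^ g i) := by
    simpa [fallingMonomial] using map_prod_X_pow_eq_sum_fallingMonomial L hL 0 (by simp) hN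
  rw [map_eq_sum_fallingEval L hL f hf hN, hone, mul_sum]
  refine (abs_sum_le_sum_abs _ _).trans (sum_le_sum fun g hg => ?_)
  rw [abs_mul, abs_mul, abs_of_nonneg (hw g), Nat.abs_cast]
  calc (multinomial univ g : ℝ) * |fallingEval f (1 / N) (fun i => g i / N)| * L (∏ i, X i ^ g i)
      ≤ multinomial univ g * B * L (∏ i, X i ^ g i) := by gcongr; exacts [hw g, hB g hg]
    _ = B * (multinomial univ g * L (∏ i, X i ^ g i)) := by ring

end PositiveFunctional

theorem natCast_div_mem_stdSimplex {σ : Type*} [Fintype σ] {g : σ → ℕ} {N : ℕ}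
    (hg : ∑ i, g i = N) (hN : N ≠ 0) : (fun i => (g i : ℝ) / N) ∈ stdSimplex ℝ σ := by
  refine ⟨fun i => by positivity, ?_⟩
  rw [← sum_div, ← Nat.cast_sum, hg, div_self (Nat.cast_ne_zero.2 hN)]

/-- **Lemma (continuity of the limit functionals over the simplex).**
If a linear functional `L` on the polynomial ring satisfies `L(x^α) ≥ 0` for all `α`,
`L(1) ≤ 1`, and `L(p·(1 - x₁ - ⋯ - xₙ)) = 0` for every polynomial `p`, then
`|L(f)| ≤ sup_{x ∈ Δ_{n-1}} |f(x)|` for every polynomial `f`. -/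
theorem limit_functional_bounded_simplex
    {n : ℕ} (L : MvPolynomial (Fin n) ℝ →ₗ[ℝ] ℝ)
    (h1 : ∀ α : Fin n →₀ ℕ, 0 ≤ L (monomial α (1 : ℝ)))
    (h2 : L 1 ≤ 1)
    (h3 : ∀ p : MvPolynomial (Fin n) ℝ, L (p * (1 - ∑ i, X i)) = 0)
    (f : MvPolynomial (Fin n) ℝ) :
    |L f| ≤ sSup ((fun x => |eval x f|) ''
      {x : Fin n → ℝ | (∀ i, 0 ≤ x i) ∧ ∑ i, x i = 1}) := by
  change |L f| ≤ sSup ((fun x => |eval x f|) '' stdSimplex ℝ (Fin n))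
  set M := sSup ((fun x => |eval x f|) '' stdSimplex ℝ (Fin n))
  have hfM : ∀ x ∈ stdSimplex ℝ (Fin n), |eval x f| ≤ M := fun x hx =>
    le_csSup ((isCompact_stdSimplex ℝ (Fin n)).bddAbove_image
      (continuous_eval f).abs.continuousOn) ⟨x, hx, rfl⟩
  have hM : 0 ≤ M := Real.sSup_nonneg (by rintro _ ⟨x, -, rfl⟩; positivity)
  refine le_of_forall_pos_le_add fun ε hε => ?_
  obtain ⟨N, hN, hNε⟩ := ((eventually_ge_atTop (f.totalDegree + 1)).and
    (eventually_forall_abs_fallingEval_sub_eval_lt f hε)).exists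
  have hbound : ∀ g ∈ piAntidiag univ N, |fallingEval f (1 / N) (fun i => g i / N)| ≤ M + ε := by
    intro g hg
    have hx := natCast_div_mem_stdSimplex (mem_piAntidiag.1 hg).1 (by omega)
    linarith [abs_sub_abs_le_abs_sub (fallingEval f (1 / N) (fun i => g i / N))
      (eval (fun i => (g i : ℝ) / N) f), hNε _ hx, hfM _ hx]
  calc |L f| ≤ (M + ε) * L 1 := abs_map_le_mul_map_one L h1 h3 f (by omega) (by omega) hbound
    _ ≤ M + ε := mul_le_of_le_one_right (by positivity) h2
end

section
/- Let p be a homogeneous polynomial of degree d in n variables and r ∈ ℕ. Let p^(r) be the maximum λ ∈ ℝ such that the polynomial (x_1 + ... + x_n)^r·( p(x) − λ(x_1 + ... + x_n)^d ) has only nonnegative coefficients, and let f_LP^(r+d) be the minimum of L(p) over all linear functionals L on ℝ[x]_{r+d} satisfying L(1) = 1, L(x^α) ≥ 0 for all |α| ≤ r + d, and L(x^α) = L(x^α·(x_1 + ... + x_n)) for all |α| ≤ r + d − 1. Then p^(r) = f_LP^(r+d). -/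
/-!
Write `S = x₁ + ⋯ + xₙ` and `N = r + d`. Both `Sʳ p` and `S^N` are forms of degree `N`, and the
coefficients of `S^N` in degree `N` are positive multinomial coefficients, so `p^(r)` is the least
ratio `coeff_β (Sʳ p) / coeff_β (S^N)` over `|β| = N`.

Weak duality: a feasible `L` satisfies `L (q S) = L q` below degree `N`, hence `L (Sʳ p) = L p` and
`L (S^N) = L 1 = 1`, and `L` is nonnegative on forms of degree `N` with nonnegative coefficients;
applied to `Sʳ (p - λ S^d)` this gives `λ ≤ L p`. Conversely, for `|β| = N`, homogenizing to degree
`N` with powers of `S` and reading off the `β`-coefficient (normalized by that of `S^N`) is a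
feasible functional whose value at `p` is the ratio above; a minimizing `β` closes the gap.
-/

open MvPolynomial Finset

namespace DKLP

variable {σ R : Type*}

section OrderedSemiring

variable [CommSemiring R] [PartialOrder R] [IsOrderedRing R]

theorem coeff_mul_nonneg {q q' : MvPolynomial σ R} (hq : ∀ β, 0 ≤ coeff β q)
    (hq' : ∀ β, 0 ≤ coeff β q') (β : σ →₀ ℕ) : 0 ≤ coeff β (q * q') := by
  classical
  rw [coeff_mul]
  exact sum_nonneg fun x _ => mul_nonneg (hq _) (hq' _)

theorem coeff_monomial_one_nonneg (α β : σ →₀ ℕ) : 0 ≤ coeff β (monomial α (1 : R)) := by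
  classical
  rw [coeff_monomial]
  split_ifs <;> simp

variable [Fintype σ]

theorem coeff_sum_X_pow_nonneg (k : ℕ) (β : σ →₀ ℕ) :
    0 ≤ coeff β ((∑ i, X i : MvPolynomial σ R) ^ k) := by
  rw [coeff_sum_X_pow_of_fintype]
  split_ifs <;> simp

end OrderedSemiring

theorem coeff_sum_X_pow_pos [CommSemiring R] [PartialOrder R] [IsStrictOrderedRing R] [Fintype σ]
    {k : ℕ} {β : σ →₀ ℕ} (hβ : β.degree = k) :
    0 < coeff β ((∑ i, X i : MvPolynomial σ R) ^ k) := by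
  rw [coeff_sum_X_pow_of_fintype, if_pos (show β.sum (fun _ m => m) = k from hβ),
    Finsupp.multinomial_eq]
  exact_mod_cast Nat.multinomial_pos _ _

section Homogenize

variable [CommSemiring R] [Fintype σ]

theorem isHomogeneous_sum_X : (∑ i, X i : MvPolynomial σ R).IsHomogeneous 1 :=
  IsHomogeneous.sum _ _ _ fun i _ => isHomogeneous_X R i

theorem isHomogeneous_sum_X_pow (k : ℕ) : ((∑ i, X i : MvPolynomial σ R) ^ k).IsHomogeneous k := by
  simpa using isHomogeneous_sum_X.pow k

/-- Components of degree above `N` are discarded. -/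
noncomputable def homogenizeBySumX (N : ℕ) : MvPolynomial σ R →ₗ[R] MvPolynomial σ R :=
  ∑ k ∈ range (N + 1), LinearMap.mulLeft R ((∑ i, X i) ^ (N - k)) ∘ₗ homogeneousComponent k

theorem homogenizeBySumX_of_isHomogeneous {q : MvPolynomial σ R} {e N : ℕ}
    (hq : q.IsHomogeneous e) (he : e ≤ N) :
    homogenizeBySumX N q = (∑ i, X i) ^ (N - e) * q := by
  simp [homogenizeBySumX, homogeneousComponent_of_mem hq, Nat.lt_succ_of_le he]

end Homogenize

theorem sum_eq_of_mem_support_of_isHomogeneous [CommSemiring R] [Fintype σ]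
    {q : MvPolynomial σ R} {e : ℕ} (hq : q.IsHomogeneous e) {α : σ →₀ ℕ} (hα : α ∈ q.support) :
    ∑ i, α i = e := by
  rw [← Finsupp.degree_eq_sum, Finsupp.degree_eq_weight_one]
  exact hq (mem_support_iff.mp hα)

theorem eq_sum_coeff_smul_monomial_one [CommSemiring R] (q : MvPolynomial σ R) :
    q = ∑ α ∈ q.support, coeff α q • monomial α (1 : R) := by
  conv_lhs => rw [q.as_sum]
  simp_rw [smul_monomial, smul_eq_mul, mul_one]

section LP

variable [Fintype σ]

def IsLPFeasible [CommSemiring R] [LE R] (N : ℕ) (L : MvPolynomial σ R → R) : Prop :=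
  (∀ q q', L (q + q') = L q + L q') ∧ (∀ (c : R) q, L (c • q) = c * L q) ∧
    L 1 = 1 ∧
    (∀ α : σ →₀ ℕ, (∑ i, α i) ≤ N → 0 ≤ L (monomial α 1)) ∧
    (∀ α : σ →₀ ℕ, (∑ i, α i) + 1 ≤ N → L (monomial α 1) = L (monomial α 1 * ∑ i, X i))

namespace IsLPFeasible

variable [CommRing R] [PartialOrder R] {L : MvPolynomial σ R → R}

section

variable {N : ℕ} (hL : IsLPFeasible N L)
include hL

theorem apply_sum_smul {ι : Type*} (s : Finset ι) (c : ι → R) (f : ι → MvPolynomial σ R) :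
    L (∑ i ∈ s, c i • f i) = ∑ i ∈ s, c i * L (f i) :=
  let φ : MvPolynomial σ R →ₗ[R] R := ⟨⟨L, hL.1⟩, hL.2.1⟩
  (map_sum φ _ s).trans (sum_congr rfl fun i _ => map_smul φ (c i) (f i))

theorem apply_eq_sum_coeff_mul (q : MvPolynomial σ R) :
    L q = ∑ α ∈ q.support, coeff α q * L (monomial α 1) := by
  conv_lhs => rw [eq_sum_coeff_smul_monomial_one q]
  exact hL.apply_sum_smul _ _ _

theorem apply_nonneg [IsOrderedRing R] {q : MvPolynomial σ R} {e : ℕ} (hq : q.IsHomogeneous e)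
    (he : e ≤ N) (hcoeff : ∀ β, 0 ≤ coeff β q) : 0 ≤ L q := by
  rw [hL.apply_eq_sum_coeff_mul]
  obtain ⟨-, -, -, hmonomial_nonneg, -⟩ := hL
  refine sum_nonneg fun α hα => mul_nonneg (hcoeff α) (hmonomial_nonneg α ?_)
  rwa [sum_eq_of_mem_support_of_isHomogeneous hq hα]

theorem apply_mul_sum_X {q : MvPolynomial σ R} {e : ℕ} (hq : q.IsHomogeneous e)
    (he : e + 1 ≤ N) : L (q * ∑ i, X i) = L q := by
  have hsplit : q * ∑ i, X i = ∑ α ∈ q.support, coeff α q • (monomial α 1 * ∑ i, X i) := by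
    conv_lhs => rw [eq_sum_coeff_smul_monomial_one q]
    simp_rw [sum_mul, smul_mul_assoc]
  rw [hsplit, hL.apply_sum_smul, hL.apply_eq_sum_coeff_mul]
  obtain ⟨-, -, -, -, hshift⟩ := hL
  refine sum_congr rfl fun α hα => ?_
  rw [← hshift α (by rwa [sum_eq_of_mem_support_of_isHomogeneous hq hα])]

theorem apply_mul_sum_X_pow {q : MvPolynomial σ R} {e j : ℕ} (hq : q.IsHomogeneous e)
    (hj : e + j ≤ N) : L (q * (∑ i, X i) ^ j) = L q := by
  induction j with
  | zero => simp
  | succ j ih =>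
    rw [pow_succ, ← mul_assoc,
      hL.apply_mul_sum_X (hq.mul (isHomogeneous_sum_X_pow j)) (by omega), ih (by omega)]

end

theorem le_apply_of_coeff_nonneg [IsOrderedRing R] {d r : ℕ} (hL : IsLPFeasible (r + d) L)
    {p : MvPolynomial σ R} (hp : p.IsHomogeneous d) {lam : R}
    (hlam : ∀ β, 0 ≤ coeff β ((∑ i, X i) ^ r * (p - C lam * (∑ i, X i) ^ d))) :
    lam ≤ L p := by
  set S : MvPolynomial σ R := ∑ i, X i
  have hq : (S ^ r * (p - C lam * S ^ d)).IsHomogeneous (r + d) :=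
    (isHomogeneous_sum_X_pow r).mul (hp.sub ((isHomogeneous_sum_X_pow d).C_mul lam))
  have ⟨hadd, hsmul, hone, _, _⟩ := hL
  have hsplit : L (p * S ^ r) = L (S ^ r * (p - C lam * S ^ d)) + lam * L (1 * S ^ (r + d)) := by
    rw [← hsmul, ← hadd, smul_eq_C_mul]
    ring_nf
  rw [← hL.apply_mul_sum_X_pow hp (j := r) (by omega), hsplit,
    hL.apply_mul_sum_X_pow (isHomogeneous_one σ R) (by omega), hone, mul_one]
  exact le_add_of_nonneg_left (hL.apply_nonneg hq le_rfl hlam)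

end IsLPFeasible

section CoeffFunctional

variable [Field R] {N : ℕ} {β : σ →₀ ℕ}

noncomputable def coeffFunctional (N : ℕ) (β : σ →₀ ℕ) (q : MvPolynomial σ R) : R :=
  coeff β (homogenizeBySumX N q) / coeff β ((∑ i, X i) ^ N)

theorem coeffFunctional_of_isHomogeneous {q : MvPolynomial σ R} {e : ℕ} (hq : q.IsHomogeneous e)
    (he : e ≤ N) : coeffFunctional N β q =
      coeff β ((∑ i, X i) ^ (N - e) * q) / coeff β ((∑ i, X i) ^ N) := by
  rw [coeffFunctional, homogenizeBySumX_of_isHomogeneous hq he]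

theorem isLPFeasible_coeffFunctional [LinearOrder R] [IsStrictOrderedRing R]
    (hβ : β.degree = N) :
    IsLPFeasible N (coeffFunctional N β : MvPolynomial σ R → R) := by
  have hpos := coeff_sum_X_pow_pos (R := R) hβ
  have hmonomial_homog (α : σ →₀ ℕ) := isHomogeneous_monomial (1 : R) (Finsupp.degree_eq_sum α)
  refine ⟨fun q q' => ?_, fun c q => ?_, ?_, fun α hα => ?_, fun α hα => ?_⟩
  · simp only [coeffFunctional, map_add, coeff_add, add_div]
  · simp only [coeffFunctional, map_smul, coeff_smul, smul_eq_mul, mul_div_assoc]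
  · rw [coeffFunctional_of_isHomogeneous (isHomogeneous_one σ R) (Nat.zero_le N), Nat.sub_zero,
      mul_one, div_self hpos.ne']
  · rw [coeffFunctional_of_isHomogeneous (hmonomial_homog α) hα]
    exact div_nonneg (coeff_mul_nonneg (coeff_sum_X_pow_nonneg _) (coeff_monomial_one_nonneg α) β)
      hpos.le
  · rw [coeffFunctional_of_isHomogeneous (hmonomial_homog α) (by omega),
      coeffFunctional_of_isHomogeneous ((hmonomial_homog α).mul isHomogeneous_sum_X) hα,
      mul_comm (monomial α 1), ← mul_assoc, ← pow_succ, Nat.sub_add_eq,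
      Nat.sub_add_cancel (by omega)]

theorem coeff_sum_X_pow_mul_sub_nonneg [LinearOrder R] [IsStrictOrderedRing R] {d r : ℕ}
    {p : MvPolynomial σ R} (hp : p.IsHomogeneous d) {lam : R}
    (hlam : ∀ β : σ →₀ ℕ, β.degree = r + d → lam ≤ coeffFunctional (r + d) β p) (β : σ →₀ ℕ) :
    0 ≤ coeff β ((∑ i, X i) ^ r * (p - C lam * (∑ i, X i) ^ d)) := by
  rw [show (∑ i, X i) ^ r * (p - C lam * (∑ i, X i) ^ d) =
      (∑ i, X i) ^ r * p - C lam * (∑ i, X i) ^ (r + d) by ring,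
    coeff_sub, coeff_C_mul, sub_nonneg]
  by_cases hβ : β.degree = r + d
  · have hle := hlam β hβ
    rwa [coeffFunctional_of_isHomogeneous hp (by omega), Nat.add_sub_cancel,
      le_div_iff₀ (coeff_sum_X_pow_pos hβ)] at hle
  · rw [(isHomogeneous_sum_X_pow _).coeff_eq_zero hβ,
      ((isHomogeneous_sum_X_pow r).mul hp).coeff_eq_zero hβ, mul_zero]

end CoeffFunctional

end LP

end DKLP

open DKLP

/-- **Theorem (the RLT/LP relaxation generalizes the de Klerk–Laurent–Parrilo bound).**
For a homogeneous polynomial `p` of degree `d` and `r ∈ ℕ`, the bound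
`p^(r) = max{λ : (x₁+⋯+xₙ)^r (p - λ(x₁+⋯+xₙ)^d) has only nonnegative coefficients}`
equals the value `f_LP^(r+d)` of the level-`(r+d)` LP relaxation of
`min_{x ∈ Δ_{n-1}} p(x)`. -/
theorem dklp_bound_eq_lp_relaxation
    {n d r : ℕ} (hn : 0 < n)
    (p : MvPolynomial (Fin n) ℝ) (hp : p.IsHomogeneous d) :
    sSup {lam : ℝ | ∀ β : Fin n →₀ ℕ,
        0 ≤ coeff β ((∑ i, X i) ^ r * (p - MvPolynomial.C lam * (∑ i, X i) ^ d))} =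
    sInf ((fun L => L p) '' {L : MvPolynomial (Fin n) ℝ → ℝ |
      (∀ q q', L (q + q') = L q + L q') ∧ (∀ (c : ℝ) q, L (c • q) = c * L q) ∧
      L 1 = 1 ∧
      (∀ α : Fin n →₀ ℕ, (∑ i, α i) ≤ r + d → 0 ≤ L (monomial α 1)) ∧
      (∀ α : Fin n →₀ ℕ, (∑ i, α i) + 1 ≤ r + d →
        L (monomial α 1) = L (monomial α 1 * ∑ i, X i))}) := by
  have hdeg {β : Fin n →₀ ℕ} : β ∈ finsuppAntidiag univ (r + d) ↔ β.degree = r + d := by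
    simp [mem_finsuppAntidiag, Finsupp.degree_eq_sum]
  obtain ⟨β₀, hβ₀, hmin⟩ := (finsuppAntidiag univ (r + d)).exists_min_image
    (fun β => coeffFunctional (r + d) β p) ⟨Finsupp.single ⟨0, hn⟩ (r + d), hdeg.mpr (by simp)⟩
  have hfeas := isLPFeasible_coeffFunctional (R := ℝ) (hdeg.mp hβ₀)
  have hmem := coeff_sum_X_pow_mul_sub_nonneg hp fun β hβ => hmin β (hdeg.mpr hβ)
  refine (IsGreatest.csSup_eq (a := coeffFunctional (r + d) β₀ p) ?_).trans
    (IsLeast.csInf_eq ?_).symm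
  · exact ⟨hmem, fun lam hlam => hfeas.le_apply_of_coeff_nonneg hp hlam⟩
  · refine ⟨⟨_, hfeas, rfl⟩, ?_⟩
    rintro _ ⟨L, hL, rfl⟩
    exact IsLPFeasible.le_apply_of_coeff_nonneg hL hp hmem
end
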